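/- Let Φ be a quantum operation on 2×2 complex matrices, given by a finite family of Kraus operators (K_m) with ∑_m K_m† K_m = I and Φ(ρ) = ∑_m K_m ρ K_m†. Then for every qubit density matrix ρ, C_{l1}(Φ(ρ)) − C_{l1}(ρ) ≤ max( C_{l1}(Φ(E₀₀)), C_{l1}(Φ(E₁₁)) ), where E₀₀ and E₁₁ are the diagonal matrix units. Consequently the generalized cohering power max over all density matrices ρ of (C_{l1}(Φ(ρ)) − C_{l1}(ρ)) equals the cohering power max over incoherent density matrices σ of C_{l1}(Φ(σ)). -/

import Mathlib

open Matrix BigOperators ComplexOrder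

/-!
Write a qubit density matrix as `ρ = ρ₀₀ E₀₀ + ρ₁₁ E₁₁ + X` with `X` its off-diagonal part. By
linearity of `Φ` and the triangle inequality for `Cl1`, the diagonal part contributes at most the
convex combination `ρ₀₀ Cl1 (Φ E₀₀) + ρ₁₁ Cl1 (Φ E₁₁) ≤ max (Cl1 (Φ E₀₀)) (Cl1 (Φ E₁₁))`. Each
off-diagonal entry of `Φ X` has norm at most `|ρ₀₁| ∑ᵢ (|Kᵢ₀₀| |Kᵢ₁₁| + |Kᵢ₁₀| |Kᵢ₀₁|)`, and
`2xy ≤ x² + y²` together with the column normalisation `∑ᵢₖ |Kᵢₖⱼ|² = 1` bounds that sum by `1`,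
so `Cl1 (Φ X) ≤ 2 |ρ₀₁| = Cl1 ρ`. The bound is attained at the incoherent states `E₀₀`, `E₁₁`,
where `Cl1` vanishes, which gives the equality of the two suprema.
-/

noncomputable def Cl1 {n : ℕ} (A : Matrix (Fin n) (Fin n) ℂ) : ℝ :=
  ∑ i, ∑ j, if i ≠ j then ‖A i j‖ else 0

def IsDensity {n : ℕ} (ρ : Matrix (Fin n) (Fin n) ℂ) : Prop :=
  ρ.PosSemidef ∧ ρ.trace = 1

def IsQuantumOp {n : ℕ} (Φ : Matrix (Fin n) (Fin n) ℂ → Matrix (Fin n) (Fin n) ℂ) : Prop :=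
  ∃ (m : ℕ) (K : Fin m → Matrix (Fin n) (Fin n) ℂ),
    (∑ i, (K i)ᴴ * K i) = 1 ∧ ∀ ρ, Φ ρ = ∑ i, K i * ρ * (K i)ᴴ

section Cl1

variable {n : ℕ}

lemma Cl1_zero : Cl1 (0 : Matrix (Fin n) (Fin n) ℂ) = 0 := by
  simp [Cl1]

lemma Cl1_add_le (A B : Matrix (Fin n) (Fin n) ℂ) : Cl1 (A + B) ≤ Cl1 A + Cl1 B := by
  simp only [Cl1, ← Finset.sum_add_distrib]
  gcongr with i _ j _
  split_ifs
  · exact norm_add_le _ _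
  · simp

lemma Cl1_sum_le {ι : Type*} (s : Finset ι) (A : ι → Matrix (Fin n) (Fin n) ℂ) :
    Cl1 (∑ i ∈ s, A i) ≤ ∑ i ∈ s, Cl1 (A i) :=
  Finset.le_sum_of_subadditive Cl1 Cl1_zero.le Cl1_add_le s A

lemma Cl1_smul (z : ℂ) (A : Matrix (Fin n) (Fin n) ℂ) : Cl1 (z • A) = ‖z‖ * Cl1 A := by
  simp only [Cl1, Finset.mul_sum, mul_ite, mul_zero, Matrix.smul_apply, smul_eq_mul, norm_mul]

lemma Cl1_sub_diagonal (A : Matrix (Fin n) (Fin n) ℂ) (d : Fin n → ℂ) :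
    Cl1 (A - diagonal d) = Cl1 A := by
  unfold Cl1
  refine Finset.sum_congr rfl fun i _ => Finset.sum_congr rfl fun j _ => ?_
  split_ifs with hij
  · rw [Matrix.sub_apply, diagonal_apply_ne _ hij, sub_zero]
  · rfl

lemma Cl1_of_isDiag {A : Matrix (Fin n) (Fin n) ℂ} (h : A.IsDiag) : Cl1 A = 0 :=
  Finset.sum_eq_zero fun i _ => Finset.sum_eq_zero fun j _ => by
    split_ifs with hij
    · rw [h hij, norm_zero]
    · rfl

lemma Cl1_fin_two (A : Matrix (Fin 2) (Fin 2) ℂ) : Cl1 A = ‖A 0 1‖ + ‖A 1 0‖ := by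
  simp [Cl1, Fin.sum_univ_two]

end Cl1

section Density

variable {n : ℕ} {ρ : Matrix (Fin n) (Fin n) ℂ}

lemma IsDensity.sum_norm_diag (hρ : IsDensity ρ) : ∑ k, ‖ρ k k‖ = 1 := by
  have h : ∑ k, (‖ρ k k‖ : ℂ) = 1 := by
    simp only [Complex.norm_of_nonneg' hρ.1.diag_nonneg]
    exact hρ.2
  exact_mod_cast h

lemma IsDensity.sum_norm_diag_mul_le (hρ : IsDensity ρ) {f : Fin n → ℝ} {M : ℝ}
    (hf : ∀ k, f k ≤ M) : ∑ k, ‖ρ k k‖ * f k ≤ M :=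
  calc ∑ k, ‖ρ k k‖ * f k ≤ ∑ k, ‖ρ k k‖ * M := by gcongr with k; exact hf k
    _ = M := by rw [← Finset.sum_mul, hρ.sum_norm_diag, one_mul]

lemma isDensity_single (k : Fin n) : IsDensity (single k k (1 : ℂ)) := by
  rw [IsDensity, ← diagonal_single, posSemidef_diagonal_iff, trace_diagonal]
  refine ⟨fun i => ?_, by simp⟩
  rw [Pi.single_apply]
  split_ifs <;> simp

lemma isDiag_single {α : Type*} [Zero α] (k : Fin n) (r : α) : (single k k r).IsDiag := by
  rw [← diagonal_single]
  exact isDiag_diagonal _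

end Density

section Kraus

variable {n : ℕ} {ι : Type*} [Fintype ι]

noncomputable def krausMap (K : ι → Matrix (Fin n) (Fin n) ℂ) :
    Matrix (Fin n) (Fin n) ℂ →ₗ[ℂ] Matrix (Fin n) (Fin n) ℂ :=
  ∑ i, LinearMap.mulLeftRight ℂ (K i, (K i)ᴴ)

lemma krausMap_apply (K : ι → Matrix (Fin n) (Fin n) ℂ) (X : Matrix (Fin n) (Fin n) ℂ) :
    krausMap K X = ∑ i, K i * X * (K i)ᴴ := by
  simp [krausMap, LinearMap.mulLeftRight_apply]

lemma IsQuantumOp.exists_eq_krausMap {Φ : Matrix (Fin n) (Fin n) ℂ → Matrix (Fin n) (Fin n) ℂ}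
    (hΦ : IsQuantumOp Φ) :
    ∃ (m : ℕ) (K : Fin m → Matrix (Fin n) (Fin n) ℂ), ∑ i, (K i)ᴴ * K i = 1 ∧ Φ = krausMap K :=
  let ⟨m, K, hK, hΦK⟩ := hΦ
  ⟨m, K, hK, funext fun X => (hΦK X).trans (krausMap_apply K X).symm⟩

lemma norm_krausMap_apply_le (K : ι → Matrix (Fin n) (Fin n) ℂ) (X : Matrix (Fin n) (Fin n) ℂ)
    (a b : Fin n) :
    ‖krausMap K X a b‖ ≤ ∑ i, ∑ k, ∑ l, ‖K i a k‖ * ‖X k l‖ * ‖K i b l‖ := by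
  have h : krausMap K X a b = ∑ i, ∑ k, ∑ l, K i a k * X k l * star (K i b l) := by
    simp only [krausMap_apply, Matrix.sum_apply, mul_apply, conjTranspose_apply, Finset.sum_mul]
    exact Finset.sum_congr rfl fun i _ => Finset.sum_comm
  rw [h]
  refine (norm_sum_le _ _).trans (Finset.sum_le_sum fun i _ => ?_)
  refine (norm_sum_le _ _).trans (Finset.sum_le_sum fun k _ => ?_)
  refine (norm_sum_le _ _).trans_eq (Finset.sum_congr rfl fun l _ => ?_)
  rw [norm_mul, norm_mul, norm_star]

lemma sum_norm_sq_col_eq_one {K : ι → Matrix (Fin n) (Fin n) ℂ} (hK : ∑ i, (K i)ᴴ * K i = 1)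
    (j : Fin n) : ∑ i, ∑ k, ‖K i k j‖ ^ 2 = 1 := by
  have h := congrFun (congrFun hK j) j
  simp only [Matrix.sum_apply, mul_apply, conjTranspose_apply, RCLike.star_def,
    Complex.conj_mul', one_apply_eq] at h
  exact_mod_cast h

lemma sum_norm_mul_norm_perm_le_one {K : ι → Matrix (Fin n) (Fin n) ℂ}
    (hK : ∑ i, (K i)ᴴ * K i = 1) (j j' : Fin n) (σ : Equiv.Perm (Fin n)) :
    ∑ i, ∑ k, ‖K i k j‖ * ‖K i (σ k) j'‖ ≤ 1 := by
  have hσ : ∀ i, ∑ k, ‖K i (σ k) j'‖ ^ 2 = ∑ k, ‖K i k j'‖ ^ 2 := fun i =>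
    Equiv.sum_comp σ (fun k => ‖K i k j'‖ ^ 2)
  calc ∑ i, ∑ k, ‖K i k j‖ * ‖K i (σ k) j'‖
      ≤ ∑ i, ∑ k, (‖K i k j‖ ^ 2 + ‖K i (σ k) j'‖ ^ 2) / 2 := by
        gcongr with i _ k _
        nlinarith [sq_nonneg (‖K i k j‖ - ‖K i (σ k) j'‖)]
    _ = ((∑ i, ∑ k, ‖K i k j‖ ^ 2) + ∑ i, ∑ k, ‖K i k j'‖ ^ 2) / 2 := by
        simp only [← Finset.sum_div, Finset.sum_add_distrib, hσ]
    _ = 1 := by rw [sum_norm_sq_col_eq_one hK, sum_norm_sq_col_eq_one hK]; norm_num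

lemma Cl1_krausMap_le (K : ι → Matrix (Fin n) (Fin n) ℂ) (ρ : Matrix (Fin n) (Fin n) ℂ) :
    Cl1 (krausMap K ρ) ≤ ∑ k, ‖ρ k k‖ * Cl1 (krausMap K (single k k 1))
      + Cl1 (krausMap K (ρ - diagonal ρ.diag)) := by
  have hdiag : diagonal ρ.diag = ∑ k, ρ k k • single k k (1 : ℂ) := by
    ext i j
    rcases eq_or_ne i j with rfl | hij
    · simp [Matrix.sum_apply, single_apply]
    · simp only [diagonal_apply_ne _ hij, Matrix.sum_apply, Matrix.smul_apply, single_apply]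
      refine (Finset.sum_eq_zero fun k _ => ?_).symm
      rw [if_neg fun h => hij (h.1.symm.trans h.2), smul_zero]
  have hsplit : krausMap K ρ
      = ∑ k, ρ k k • krausMap K (single k k 1) + krausMap K (ρ - diagonal ρ.diag) := by
    rw [map_sub, hdiag, map_sum]
    simp only [map_smul, add_sub_cancel]
  calc Cl1 (krausMap K ρ)
      ≤ ∑ k, Cl1 (ρ k k • krausMap K (single k k 1))
          + Cl1 (krausMap K (ρ - diagonal ρ.diag)) := by
        rw [hsplit]
        exact (Cl1_add_le _ _).trans (add_le_add_left (Cl1_sum_le _ _) _)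
    _ = _ := by simp only [Cl1_smul]

end Kraus

section Qubit

variable {ι : Type*} [Fintype ι] {K : ι → Matrix (Fin 2) (Fin 2) ℂ}

lemma Cl1_krausMap_le_of_hollow (hK : ∑ i, (K i)ᴴ * K i = 1) {X : Matrix (Fin 2) (Fin 2) ℂ}
    (h00 : X 0 0 = 0) (h11 : X 1 1 = 0) (h10 : ‖X 1 0‖ = ‖X 0 1‖) :
    Cl1 (krausMap K X) ≤ Cl1 X := by
  have hentry : ∀ a b : Fin 2, a ≠ b → ‖krausMap K X a b‖ ≤ ‖X 0 1‖ := by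
    intro a b hab
    -- with `σ = swap 0 1` the sum is `∑ᵢ (|Kᵢ₀₀| |Kᵢ₁₁| + |Kᵢ₁₀| |Kᵢ₀₁|)`
    calc ‖krausMap K X a b‖
        ≤ ‖X 0 1‖ * ∑ i, ∑ k, ‖K i k 0‖ * ‖K i (Equiv.swap 0 1 k) 1‖ := by
          refine (norm_krausMap_apply_le K X a b).trans_eq ?_
          fin_cases a <;> fin_cases b <;> simp_all [Fin.sum_univ_two, Finset.mul_sum] <;>
            exact Finset.sum_congr rfl fun i _ => by ring
      _ ≤ ‖X 0 1‖ :=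
          mul_le_of_le_one_right (norm_nonneg _) (sum_norm_mul_norm_perm_le_one hK 0 1 _)
  rw [Cl1_fin_two, Cl1_fin_two, h10]
  linarith [hentry 0 1 (by decide), hentry 1 0 (by decide)]

lemma Cl1_krausMap_sub_Cl1_le_max (hK : ∑ i, (K i)ᴴ * K i = 1) {ρ : Matrix (Fin 2) (Fin 2) ℂ}
    (hρ : IsDensity ρ) :
    Cl1 (krausMap K ρ) - Cl1 ρ ≤
      max (Cl1 (krausMap K (single 0 0 1))) (Cl1 (krausMap K (single 1 1 1))) := by
  have hdiag := hρ.sum_norm_diag_mul_le (f := fun k => Cl1 (krausMap K (single k k 1)))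
    (Fin.forall_fin_two.2 ⟨le_max_left _ _, le_max_right _ _⟩)
  have hoff : Cl1 (krausMap K (ρ - diagonal ρ.diag)) ≤ Cl1 ρ := by
    refine (Cl1_krausMap_le_of_hollow hK (by simp) (by simp) ?_).trans (Cl1_sub_diagonal ρ _).le
    simp only [Matrix.sub_apply, diagonal_apply_ne _ (by decide : (1 : Fin 2) ≠ 0),
      diagonal_apply_ne _ (by decide : (0 : Fin 2) ≠ 1), sub_zero, ← hρ.1.isHermitian.apply 1 0,
      norm_star]
  linarith [Cl1_krausMap_le K ρ]

end Qubit

theorem cohering_power_eq_generalized_cohering_power_qubit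
    (Φ : Matrix (Fin 2) (Fin 2) ℂ → Matrix (Fin 2) (Fin 2) ℂ)
    (hΦ : IsQuantumOp Φ) :
    (∀ ρ : Matrix (Fin 2) (Fin 2) ℂ, IsDensity ρ →
      Cl1 (Φ ρ) - Cl1 ρ ≤
        max (Cl1 (Φ (Matrix.single (0 : Fin 2) 0 (1 : ℂ))))
            (Cl1 (Φ (Matrix.single (1 : Fin 2) 1 (1 : ℂ))))) ∧
    sSup {x : ℝ | ∃ ρ : Matrix (Fin 2) (Fin 2) ℂ, IsDensity ρ ∧ x = Cl1 (Φ ρ) - Cl1 ρ} =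
      sSup {x : ℝ | ∃ σ : Matrix (Fin 2) (Fin 2) ℂ, IsDensity σ ∧ σ.IsDiag ∧ x = Cl1 (Φ σ)} := by
  obtain ⟨m, K, hK, rfl⟩ := hΦ.exists_eq_krausMap
  have hbound := fun ρ (hρ : IsDensity ρ) => Cl1_krausMap_sub_Cl1_le_max hK hρ
  refine ⟨hbound, csSup_eq_csSup_of_forall_exists_le ?_ ?_⟩
  · rintro x ⟨ρ, hρ, rfl⟩
    obtain ⟨k, hk⟩ : ∃ k : Fin 2, max (Cl1 (krausMap K (single 0 0 1)))
        (Cl1 (krausMap K (single 1 1 1))) = Cl1 (krausMap K (single k k 1)) :=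
      (max_choice _ _).elim (⟨0, ·⟩) (⟨1, ·⟩)
    exact ⟨_, ⟨_, isDensity_single k, isDiag_single k 1, rfl⟩, hk ▸ hbound ρ hρ⟩
  · rintro y ⟨σ, hσ, hσdiag, rfl⟩
    exact ⟨_, ⟨σ, hσ, rfl⟩, by rw [Cl1_of_isDiag hσdiag, sub_zero]⟩
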